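/- arXiv:1702.06684 — 4 statements merged into one kernel-verified Lean document; each statement's English description precedes it below -/
import Mathlib

section
/- For a word w = x₁x₂⋯x_l over the alphabet {1,2}, the number f_w of saturated chains from the empty word to w in the Young-Fibonacci lattice equals the product over all indices i with x_i = 2 of (x_i + x_{i+1} + ⋯ + x_l − 1). -/
/-- The list of words covered by `w` in the Young-Fibonacci lattice. -/
def preds : List ℕ → List (List ℕ)
  | [] => []
  | 1 :: t => [t]
  | 2 :: t => (1 :: t) :: (preds t).map (fun u => 2 :: u)
  | _ :: _ => []

theorem preds_sum_lt : ∀ (w u : List ℕ), u ∈ preds w → u.sum < w.sum := by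
  intro w
  induction w using preds.induct with
  | case1 => intro u h; simp [preds] at h
  | case2 t => intro u h; simp [preds] at h; subst h; simp
  | case3 t ih =>
      intro u h
      simp [preds] at h
      rcases h with h | ⟨v, hv, rfl⟩
      · subst h; simp
      · have := ih v hv; simpa using by omega
  | case4 x t h1 h2 => intro u h; simp [preds] at h

/-- The number of saturated chains from the empty word to `w`. -/
def f (w : List ℕ) : ℕ :=
  if w = [] then 1
  else ((preds w).attach.map (fun u => f u.1)).sum
termination_by w.sum
decreasing_by exact preds_sum_lt w u.1 u.2

/-- The product formula. -/
def fprod (w : List ℕ) : ℕ :=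
  ∏ i ∈ Finset.univ.filter (fun i : Fin w.length => w.get i = 2), ((w.drop i.1).sum - 1)

/-!
Write `|t|` for the rank of `t`. The only word covered by `1t` is `t`, so `f (1t) = f t`.
The words covered by `2t` are `1t` and the words `2u` with `u` covered by `t`. By induction on
the rank, `f (2u) = (|u| + 1) f u = |t| f u`, and summing over `u` gives
`f (2t) = f t + |t| f t = (|t| + 1) f t`. This is the recursion satisfied by the product, whose
factor for a letter `2` in front of `t` is `(2 + |t|) - 1`.
-/

def hookProd : List ℕ → ℕ
  | [] => 1
  | a :: t => (if a = 2 then t.sum + 1 else 1) * hookProd t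

theorem fprod_eq_hookProd (w : List ℕ) : fprod w = hookProd w := by
  induction w with
  | nil => simp [fprod, hookProd]
  | cons a t ih =>
    simp only [fprod, Finset.prod_filter, List.length_cons] at ih ⊢
    rw [Fin.prod_univ_succ, hookProd, ← ih]
    by_cases ha : a = 2 <;> simp [ha, add_comm]

theorem sum_add_one_of_mem_preds {w u : List ℕ} (hu : u ∈ preds w) : u.sum + 1 = w.sum := by
  induction w using preds.induct generalizing u with
  | case3 t ih =>
    simp only [preds, List.mem_cons, List.mem_map] at hu
    rcases hu with rfl | ⟨v, hv, rfl⟩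
    · simp only [List.sum_cons]; omega
    · simp only [List.sum_cons, ← ih hv]; omega
  | _ => simp_all [preds, add_comm]

theorem mem_or_eq_one_of_mem_preds {w u : List ℕ} (hu : u ∈ preds w) {x : ℕ} (hx : x ∈ u) :
    x ∈ w ∨ x = 1 := by
  induction w using preds.induct generalizing u with
  | case3 t ih =>
    simp only [preds, List.mem_cons, List.mem_map] at hu
    rcases hu with rfl | ⟨v, hv, rfl⟩ <;> simp only [List.mem_cons] at hx ⊢
    · tauto
    · rcases hx with rfl | hx
      · simp
      · have := ih hv hx; tauto
  | _ => simp_all [preds]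

theorem f_nil : f [] = 1 := by
  simp [f]

theorem f_eq_sum_preds {w : List ℕ} (hw : w ≠ []) : f w = ((preds w).map f).sum := by
  rw [f]
  simp [hw]

theorem f_one_cons (t : List ℕ) : f (1 :: t) = f t := by
  simp [f_eq_sum_preds, preds]

theorem f_two_cons (t : List ℕ) :
    f (2 :: t) = f t + ((preds t).map fun u => f (2 :: u)).sum := by
  rw [f_eq_sum_preds (List.cons_ne_nil 2 t), preds, List.map_cons, List.sum_cons, f_one_cons,
    List.map_map]
  rfl

theorem f_eq_hookProd : ∀ w : List ℕ, (∀ x ∈ w, x = 1 ∨ x = 2) → f w = hookProd w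
  | [], _ => by simp [f_nil, hookProd]
  | a :: t, hw => by
    have ht : ∀ x ∈ t, x = 1 ∨ x = 2 := fun x hx => hw x (List.mem_cons_of_mem a hx)
    have ih := f_eq_hookProd t ht
    rcases hw a List.mem_cons_self with rfl | rfl
    · simp [f_one_cons, ih, hookProd]
    have hpreds : ∀ u ∈ preds t, f (2 :: u) = t.sum * f u := by
      intro u hu
      have hu' : ∀ x ∈ u, x = 1 ∨ x = 2 := fun x hx =>
        (mem_or_eq_one_of_mem_preds hu hx).elim (ht x) Or.inl
      have h2u : ∀ x ∈ 2 :: u, x = 1 ∨ x = 2 := by simpa using hu'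
      rw [f_eq_hookProd (2 :: u) h2u, f_eq_hookProd u hu', hookProd, if_pos rfl,
        sum_add_one_of_mem_preds hu]
    calc f (2 :: t)
        = f t + ((preds t).map fun u => t.sum * f u).sum := by
          rw [f_two_cons, List.map_congr_left hpreds]
      _ = f t + t.sum * ((preds t).map f).sum := by rw [List.sum_map_mul_left]
      _ = (t.sum + 1) * f t := by
          rcases eq_or_ne t [] with rfl | hne
          · simp [preds]
          · rw [← f_eq_sum_preds hne]; ring
      _ = hookProd (2 :: t) := by simp [hookProd, ih]
termination_by w => w.sum
decreasing_by
  all_goals simp_wf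
  · have := hw a List.mem_cons_self; omega
  all_goals subst_vars; have := sum_add_one_of_mem_preds hu; omega

/-- the chain-counting statistic equals the hook-product formula. -/
theorem f_eq_fprod (w : List ℕ) (hw : ∀ x ∈ w, x = 1 ∨ x = 2) :
    f w = ∏ i ∈ Finset.univ.filter (fun i : Fin w.length => w.get i = 2),
      ((w.drop i.1).sum - 1) := by
  rw [← fprod, fprod_eq_hookProd]
  exact f_eq_hookProd w hw
end

section
/- A word w over {1,2} has f_w odd if and only if w is of the form a₀a₁⋯a_{k−1} or 1a₀a₁⋯a_{k−1}, where each block a_i is either the letter 2 or the pair 11. Equivalently, f_w is odd if and only if the number of 1's to the right of each 2 in w is even. -/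
/-!
Since `2 ∣ ∏ gᵢ` iff `2` divides some factor, `fprod w` is odd iff every factor is. The factor
of a letter `2` is `2 + s - 1 = s + 1`, where `s` is the sum of the letters to its right, and
`s ≡ (number of 1s to the right) (mod 2)`; so `fprod w` is odd iff each `2` has an even number
of `1`s to its right. Reading such a word from the right, the `1`s pair up into blocks `11`
between consecutive `2`s, with at most one `1` left over at the very front.
-/

theorem Nat.odd_finsetProd_iff {ι : Type*} (s : Finset ι) (g : ι → ℕ) :
    Odd (∏ i ∈ s, g i) ↔ ∀ i ∈ s, Odd (g i) := by
  classical
  induction s using Finset.induction_on with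
  | empty => simp
  | insert a s ha ih => simp [Finset.prod_insert ha, Nat.odd_mul, ih]

theorem even_sum_iff_even_count_one {w : List ℕ} (hw : ∀ x ∈ w, x = 1 ∨ x = 2) :
    Even w.sum ↔ Even (w.count 1) := by
  induction w with
  | nil => simp
  | cons x t ih =>
    rw [List.forall_mem_cons] at hw
    obtain ⟨rfl | rfl, ht⟩ := hw <;> simp [Nat.even_add, ih ht, parity_simps]

theorem odd_fprod_iff {w : List ℕ} (hw : ∀ x ∈ w, x = 1 ∨ x = 2) :
    Odd (fprod w) ↔
      ∀ i : Fin w.length, w.get i = 2 → Even ((w.drop (i.1 + 1)).count 1) := by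
  rw [fprod, Nat.odd_finsetProd_iff]
  refine forall_congr' fun i => ?_
  simp only [Finset.mem_filter, Finset.mem_univ, true_and]
  refine imp_congr_right fun hi => ?_
  have hdrop : ∀ x ∈ w.drop (i + 1), x = 1 ∨ x = 2 := fun x hx => hw x (List.mem_of_mem_drop hx)
  rw [List.drop_eq_getElem_cons i.isLt, ← List.get_eq_getElem, hi, List.sum_cons,
    show 2 + (w.drop (i + 1)).sum - 1 = (w.drop (i + 1)).sum + 1 by omega, Nat.odd_add_one,
    Nat.not_odd_iff_even, even_sum_iff_even_count_one hdrop]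

def EvenOnesAfterTwos : List ℕ → Prop
  | [] => True
  | x :: t => (x = 2 → Even (t.count 1)) ∧ EvenOnesAfterTwos t

theorem evenOnesAfterTwos_iff_forall_get (w : List ℕ) :
    EvenOnesAfterTwos w ↔
      ∀ i : Fin w.length, w.get i = 2 → Even ((w.drop (i.1 + 1)).count 1) := by
  induction w with
  | nil => simp [EvenOnesAfterTwos]
  | cons x t ih => simp [EvenOnesAfterTwos, Fin.forall_fin_succ, ih]

def IsBlockWord (w : List ℕ) : Prop :=
  ∃ blocks : List (List ℕ), (∀ b ∈ blocks, b = [2] ∨ b = [1, 1]) ∧ w = blocks.flatten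

namespace IsBlockWord

theorem nil : IsBlockWord [] := ⟨[], by simp⟩

theorem cons_two {w : List ℕ} (h : IsBlockWord w) : IsBlockWord (2 :: w) := by
  obtain ⟨blocks, hblocks, rfl⟩ := h
  exact ⟨[2] :: blocks, by simpa using hblocks, rfl⟩

theorem cons_one_one {w : List ℕ} (h : IsBlockWord w) : IsBlockWord (1 :: 1 :: w) := by
  obtain ⟨blocks, hblocks, rfl⟩ := h
  exact ⟨[1, 1] :: blocks, by simpa using hblocks, rfl⟩

theorem evenOnesAfterTwos_and_even_count {w : List ℕ} (h : IsBlockWord w) :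
    EvenOnesAfterTwos w ∧ Even (w.count 1) := by
  obtain ⟨blocks, hblocks, rfl⟩ := h
  induction blocks with
  | nil => simp [EvenOnesAfterTwos]
  | cons b blocks ih =>
    rw [List.forall_mem_cons] at hblocks
    obtain ⟨hP, hE⟩ := ih hblocks.2
    obtain rfl | rfl := hblocks.1 <;>
      simp [EvenOnesAfterTwos, hP, hE, parity_simps]

end IsBlockWord

theorem EvenOnesAfterTwos.isBlockWord_or {w : List ℕ} (hw : ∀ x ∈ w, x = 1 ∨ x = 2)
    (h : EvenOnesAfterTwos w) : IsBlockWord w ∨ ∃ v, w = 1 :: v ∧ IsBlockWord v := by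
  induction w with
  | nil => exact .inl .nil
  | cons x t ih =>
    rw [List.forall_mem_cons] at hw
    obtain ⟨hx, ht⟩ := h
    obtain ⟨rfl | rfl, hw⟩ := hw
    · rcases ih hw ht with ht | ⟨v, rfl, hv⟩
      · exact .inr ⟨t, rfl, ht⟩
      · exact .inl hv.cons_one_one
    · rcases ih hw ht with ht | ⟨v, rfl, hv⟩
      · exact .inl ht.cons_two
      · have := hv.evenOnesAfterTwos_and_even_count.2
        simp [parity_simps, this] at hx

theorem evenOnesAfterTwos_iff_isBlockWord_or {w : List ℕ} (hw : ∀ x ∈ w, x = 1 ∨ x = 2) :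
    EvenOnesAfterTwos w ↔ IsBlockWord w ∨ ∃ v, w = 1 :: v ∧ IsBlockWord v := by
  refine ⟨EvenOnesAfterTwos.isBlockWord_or hw, ?_⟩
  rintro (h | ⟨v, rfl, hv⟩)
  · exact h.evenOnesAfterTwos_and_even_count.1
  · exact ⟨by simp, hv.evenOnesAfterTwos_and_even_count.1⟩

/-- `f w` is odd iff `w` is a (possibly `1`-prefixed) concatenation of
blocks `2` and `11`, iff the number of `1`s to the right of each `2` is even. -/
theorem odd_word_characterization (w : List ℕ) (hw : ∀ x ∈ w, x = 1 ∨ x = 2) :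
    (Odd (fprod w) ↔
      ∃ blocks : List (List ℕ), (∀ b ∈ blocks, b = [2] ∨ b = [1, 1]) ∧
        (w = blocks.flatten ∨ w = 1 :: blocks.flatten)) ∧
    (Odd (fprod w) ↔
      ∀ i : Fin w.length, w.get i = 2 → Even ((w.drop (i.1 + 1)).count 1)) := by
  have hodd := odd_fprod_iff hw
  refine ⟨?_, hodd⟩
  rw [hodd, ← evenOnesAfterTwos_iff_forall_get, evenOnesAfterTwos_iff_isBlockWord_or hw]
  constructor
  · rintro (⟨blocks, hblocks, rfl⟩ | ⟨v, rfl, blocks, hblocks, rfl⟩)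
    exacts [⟨blocks, hblocks, .inl rfl⟩, ⟨blocks, hblocks, .inr rfl⟩]
  · rintro ⟨blocks, hblocks, rfl | rfl⟩
    exacts [.inl ⟨blocks, hblocks, rfl⟩, .inr ⟨_, rfl, blocks, hblocks, rfl⟩]
end

section
/- The number of words w over {1,2} with letter-sum n such that f_w is odd equals 2^⌊n/2⌋. -/
lemma fprod_nil : fprod [] = 1 := rfl

lemma fprod_cons (x : ℕ) (t : List ℕ) :
    fprod (x :: t) = (if x = 2 then x + t.sum - 1 else 1) * fprod t := by
  unfold fprod
  rw [Finset.prod_filter, Finset.prod_filter]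
  exact Fin.prod_univ_succ (n := t.length) _

lemma fprod_cons_one (t : List ℕ) : fprod (1 :: t) = fprod t := by
  simp [fprod_cons]

lemma fprod_cons_two (t : List ℕ) : fprod (2 :: t) = (t.sum + 1) * fprod t := by
  rw [fprod_cons, if_pos rfl]
  congr 1
  omega

def IsOddWord (w : List ℕ) : Prop :=
  (∀ x ∈ w, x = 1 ∨ x = 2) ∧ Odd (fprod w)

lemma isOddWord_nil : IsOddWord [] := ⟨by simp, by simp [fprod_nil]⟩

lemma isOddWord_cons_one (t : List ℕ) : IsOddWord (1 :: t) ↔ IsOddWord t := by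
  simp [IsOddWord, fprod_cons_one]

lemma isOddWord_cons_two (t : List ℕ) : IsOddWord (2 :: t) ↔ Even t.sum ∧ IsOddWord t := by
  simp only [IsOddWord, fprod_cons_two, Nat.odd_mul, Nat.odd_add_one, Nat.not_odd_iff_even,
    List.forall_mem_cons]
  tauto

lemma isOddWord_cons {x : ℕ} {t : List ℕ} :
    IsOddWord (x :: t) ↔ (x = 1 ∧ IsOddWord t) ∨ (x = 2 ∧ Even t.sum ∧ IsOddWord t) := by
  constructor
  · intro h
    rcases h.1 x List.mem_cons_self with rfl | rfl
    · exact Or.inl ⟨rfl, (isOddWord_cons_one t).1 h⟩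
    · exact Or.inr ⟨rfl, (isOddWord_cons_two t).1 h⟩
  · rintro (⟨rfl, h⟩ | ⟨rfl, h⟩)
    · exact (isOddWord_cons_one t).2 h
    · exact (isOddWord_cons_two t).2 h

def oddWords : ℕ → Finset (List ℕ)
  | 0 => {[]}
  | 1 => {[1]}
  | n + 2 =>
    (oddWords (n + 1)).map ⟨List.cons 1, List.cons_injective⟩ ∪
      if Even n then (oddWords n).map ⟨List.cons 2, List.cons_injective⟩ else ∅

lemma mem_oddWords {n : ℕ} {w : List ℕ} : w ∈ oddWords n ↔ IsOddWord w ∧ w.sum = n := by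
  induction n using oddWords.induct generalizing w with
  | case1 => cases w <;> simp [oddWords, isOddWord_nil, isOddWord_cons]; omega
  | case2 =>
    rcases w with _ | ⟨x, _ | ⟨y, t⟩⟩ <;>
      simp [oddWords, isOddWord_nil, isOddWord_cons] <;> omega
  | case3 n ih₁ ih₀ =>
    cases w <;> by_cases hn : Even n <;> simp [oddWords, hn, isOddWord_cons, ih₁, ih₀] <;> grind

lemma card_oddWords (n : ℕ) : (oddWords n).card = 2 ^ (n / 2) := by
  induction n using oddWords.induct with
  | case1 => rfl
  | case2 => rfl
  | case3 n ih₁ ih₀ =>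
    obtain ⟨k, rfl | rfl⟩ := Nat.even_or_odd' n
    · rw [oddWords, if_pos (even_two_mul k),
        Finset.card_union_of_disjoint (by simp [Finset.disjoint_left]), Finset.card_map,
        Finset.card_map, ih₁, ih₀]
      rw [show (2 * k + 1) / 2 = k by omega, show 2 * k / 2 = k by omega,
        show (2 * k + 2) / 2 = k + 1 by omega, pow_succ]
      ring
    · rw [oddWords, if_neg (by simp), Finset.union_empty, Finset.card_map, ih₁]
      congr 1
      omega

/-- the number of words over `{1,2}` of rank `n` with odd `f` is `2^⌊n/2⌋`. -/
theorem card_odd_words (n : ℕ) (L : Finset (List ℕ))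
    (hL : ∀ w : List ℕ, w ∈ L ↔ (∀ x ∈ w, x = 1 ∨ x = 2) ∧ w.sum = n ∧ Odd (fprod w)) :
    L.card = 2 ^ (n / 2) := by
  have hL_eq : L = oddWords n := by
    ext w
    rw [hL, mem_oddWords, IsOddWord]
    tauto
  rw [hL_eq, card_oddWords]
end

section
/- For every k ≥ 1, each odd residue class modulo 2^k contains the same number of subsets S of the odd numbers {1, 3, 5, …, 2^{k−1}+1} whose product ∏_{x∈S} x lies in that class; that is, the map S ↦ ∏_{x∈S} x mod 2^k from subsets of {1,3,…,2^{k−1}+1} to (ℤ/2^kℤ)* is exactly 2-to-1 onto the odd residues. -/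
/-!
For `u : ι → G` into a finite abelian group and `A : Finset ι`, let `f_A(g)` count the `S ⊆ A`
with `∏_{x ∈ S} u x = g`. The `h` with `f_A(g h) = f_A(g)` for all `g` form a subgroup `Stab(A)`,
monotone in `A`. Since `f_{A ∪ {x}} = (1 + [u x]) f_A` in the group ring, `u x ∈ Stab(A ∪ {x})`
as soon as `(u x)² ∈ Stab(A)`. In a 2-group every proper subgroup `H` has some `g ∉ H` with
`g² ∈ H`, so `Stab` can be pushed up to the whole group as long as `A` supplies such elements.
For `(ℤ/2^k)ˣ` and `A` the odd numbers up to `p = 2^(k-1) + 1`: `p² ≡ 1`, and every odd `t < 2^k`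
is in `A` or satisfies `t - 2^(k-1) ≡ t p`, so once `p ∈ Stab(A)` the set `A` realises every
needed element up to the factor `p`. Hence `Stab(A) = (ℤ/2^k)ˣ`, i.e. `f_A` is constant.
-/

def oddsUpTo (n : ℕ) : Finset ℕ := (Finset.range (n + 1)).filter (fun x => Odd x)

open Finset

theorem IsPGroup.exists_notMem_pow_mem {p : ℕ} [Fact p.Prime] {P : Type*} [Group P] [Finite P]
    (hP : IsPGroup p P) {H : Subgroup P} [H.Normal] (hH : H ≠ ⊤) : ∃ g ∉ H, g ^ p ∈ H := by
  have : Nontrivial (P ⧸ H) := QuotientGroup.nontrivial_iff.mpr hH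
  obtain ⟨n, hn, hcard⟩ := (hP.to_quotient H).nontrivial_iff_card.mp this
  obtain ⟨q, hq⟩ := exists_prime_orderOf_dvd_card' p (hcard ▸ dvd_pow_self p hn.ne')
  obtain ⟨g, rfl⟩ := QuotientGroup.mk_surjective q
  refine ⟨g, fun hg => ?_, ?_⟩
  · rw [(QuotientGroup.eq_one_iff g).mpr hg, orderOf_one] at hq
    exact (Fact.out : p.Prime).one_lt.ne hq
  · rw [← QuotientGroup.eq_one_iff, QuotientGroup.mk_pow, ← hq, pow_orderOf_eq_one]

section SubsetProducts

variable {ι G : Type*} [CommGroup G] [DecidableEq G]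

def subsetProdCount (u : ι → G) (A : Finset ι) (g : G) : ℕ :=
  #{S ∈ A.powerset | ∏ x ∈ S, u x = g}

theorem subsetProdCount_insert [DecidableEq ι] (u : ι → G) {A : Finset ι} {x : ι} (hx : x ∉ A)
    (g : G) :
    subsetProdCount u (insert x A) g =
      subsetProdCount u A g + subsetProdCount u A (g * (u x)⁻¹) := by
  simp only [subsetProdCount, card_filter, sum_powerset_insert hx]
  congr 1
  refine sum_congr rfl fun S hS => ?_
  rw [prod_insert fun hxS => hx (mem_powerset.1 hS hxS), mul_comm]
  simp only [eq_mul_inv_iff_mul_eq]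

def subsetProdCountStab (u : ι → G) (A : Finset ι) : Subgroup G where
  carrier := {h | ∀ g, subsetProdCount u A (g * h) = subsetProdCount u A g}
  one_mem' g := by rw [mul_one]
  mul_mem' {a b} ha hb g := by rw [← mul_assoc, hb, ha]
  inv_mem' {a} ha g := by rw [← ha, inv_mul_cancel_right]

theorem mem_subsetProdCountStab {u : ι → G} {A : Finset ι} {h : G} :
    h ∈ subsetProdCountStab u A ↔ ∀ g, subsetProdCount u A (g * h) = subsetProdCount u A g :=
  Iff.rfl

theorem subsetProdCountStab_le_insert [DecidableEq ι] (u : ι → G) (A : Finset ι) (x : ι) :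
    subsetProdCountStab u A ≤ subsetProdCountStab u (insert x A) := by
  by_cases hx : x ∈ A
  · rw [insert_eq_of_mem hx]
  intro h hh g
  rw [subsetProdCount_insert u hx, subsetProdCount_insert u hx, hh, mul_right_comm, hh]

theorem subsetProdCountStab_mono [DecidableEq ι] (u : ι → G) {B A : Finset ι} (hBA : B ⊆ A) :
    subsetProdCountStab u B ≤ subsetProdCountStab u A := by
  rw [← sdiff_union_of_subset hBA]
  induction A \ B using Finset.induction_on with
  | empty => rw [empty_union]
  | insert x C _ ih => exact ih.trans (insert_union x C B ▸ subsetProdCountStab_le_insert u _ x)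

theorem mem_subsetProdCountStab_insert [DecidableEq ι] {u : ι → G} {A : Finset ι} {x : ι}
    (hx : x ∉ A) (hsq : u x ^ 2 ∈ subsetProdCountStab u A) :
    u x ∈ subsetProdCountStab u (insert x A) := by
  intro g
  rw [subsetProdCount_insert u hx, subsetProdCount_insert u hx, mul_inv_cancel_right, add_comm,
    ← hsq (g * (u x)⁻¹)]
  group

theorem subsetProdCountStab_eq_top [Finite G] (hG : IsPGroup 2 G)
    {u : ι → G} {A : Finset ι} {x₀ : ι} (hx₀ : x₀ ∈ A) (hsq : u x₀ ^ 2 = 1)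
    (hcover : ∀ g, ∃ y ∈ A, u y = g ∨ u y = g * u x₀) :
    subsetProdCountStab u A = ⊤ := by
  classical
  set Good : Finset ι → Prop := fun B =>
    u x₀ ∈ subsetProdCountStab u B ∧ ∀ x ∈ B, u x ∈ subsetProdCountStab u B
  have good_insert {B : Finset ι} {y : ι} (hB : Good B) (hy : u y ∉ subsetProdCountStab u B)
      (hy2 : u y ^ 2 ∈ subsetProdCountStab u B) : Good (insert y B) := by
    have hle := subsetProdCountStab_le_insert u B y
    have hyB : y ∉ B := fun h => hy (hB.2 y h)
    refine ⟨hle hB.1, (forall_mem_insert _ _ _).2 ⟨mem_subsetProdCountStab_insert hyB hy2, ?_⟩⟩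
    exact fun x hx => hle (hB.2 x hx)
  have good_singleton : Good {x₀} := by
    have := mem_subsetProdCountStab_insert (notMem_empty x₀)
      (hsq ▸ (subsetProdCountStab u ∅).one_mem)
    exact ⟨this, by simpa using this⟩
  -- take a good `B ⊆ A` with maximal stabiliser; if it were proper, some `y` would enlarge it
  obtain ⟨B, hB, hmax⟩ := {B ∈ A.powerset | Good B}.exists_maximalFor (subsetProdCountStab u)
    ⟨{x₀}, by simpa [hx₀] using good_singleton⟩
  rw [mem_filter, mem_powerset] at hB
  obtain ⟨hBA, hBgood⟩ := hB
  refine eq_top_mono (subsetProdCountStab_mono u hBA) (by_contra fun hne => ?_)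
  obtain ⟨g, hg, hg2⟩ := hG.exists_notMem_pow_mem hne
  obtain ⟨y, hyA, hyg⟩ := hcover g
  have hy : u y ∉ subsetProdCountStab u B := by
    rcases hyg with h | h <;> rw [h]
    · exact hg
    · exact fun h' => hg (by simpa using mul_mem h' (inv_mem hBgood.1))
  have hy2 : u y ^ 2 ∈ subsetProdCountStab u B := by
    rcases hyg with h | h <;> rw [h]
    · exact hg2
    · rwa [mul_pow, hsq, mul_one]
  have hgood := good_insert hBgood hy hy2
  exact hy (hmax (by simpa [hyA, insert_subset_iff, hBA] using hgood)
    (subsetProdCountStab_le_insert u B y) (hgood.2 y (mem_insert_self y B)))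

end SubsetProducts

theorem mem_oddsUpTo {n x : ℕ} : x ∈ oddsUpTo n ↔ x ≤ n ∧ Odd x := by
  simp [oddsUpTo]

/-- `n` as a unit of `ZMod m`, with the junk value `1` when `n` is not coprime to `m`. -/
def natUnit (m n : ℕ) : (ZMod m)ˣ :=
  if h : n.Coprime m then ZMod.unitOfCoprime n h else 1

theorem coe_natUnit {m n : ℕ} (h : n.Coprime m) : (natUnit m n : ZMod m) = n := by
  rw [natUnit, dif_pos h, ZMod.coe_unitOfCoprime]

theorem coe_prod_natUnit {m : ℕ} {S : Finset ℕ} (h : ∀ x ∈ S, x.Coprime m) :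
    ((∏ x ∈ S, natUnit m x : (ZMod m)ˣ) : ZMod m) = ((∏ x ∈ S, x : ℕ) : ZMod m) := by
  push_cast [Units.coe_prod]
  exact prod_congr rfl fun x hx => coe_natUnit (h x hx)

theorem Odd.coprime_two_pow {n : ℕ} (h : Odd n) (k : ℕ) : n.Coprime (2 ^ k) :=
  (Nat.coprime_two_right.2 h).pow_right k

theorem odd_two_pow_add_one {j : ℕ} (hj : j ≠ 0) : Odd (2 ^ j + 1) :=
  (Nat.even_pow.2 ⟨even_two, hj⟩).add_one

theorem isPGroup_units_zmod_two_pow (k : ℕ) : IsPGroup 2 (ZMod (2 ^ k))ˣ := by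
  cases k with
  | zero => exact IsPGroup.of_card (n := 0) (by simp)
  | succ j =>
    refine IsPGroup.of_card (n := j) ?_
    rw [Nat.card_eq_fintype_card, ZMod.card_units_eq_totient,
      Nat.totient_prime_pow_succ Nat.prime_two]
    simp

theorem natUnit_two_pow_add_one_sq {j : ℕ} (hj : j ≠ 0) :
    natUnit (2 ^ (j + 1)) (2 ^ j + 1) ^ 2 = 1 := by
  obtain ⟨i, rfl⟩ := Nat.exists_eq_succ_of_ne_zero hj
  have hodd : (2 ^ (i + 1) + 1).Coprime (2 ^ (i + 2)) :=
    odd_two_pow_add_one (Nat.succ_ne_zero i) |>.coprime_two_pow _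
  have h0 : ((2 ^ (i + 2) : ℕ) : ZMod (2 ^ (i + 2))) = 0 := ZMod.natCast_self _
  ext
  push_cast [coe_natUnit hodd]
  push_cast at h0
  linear_combination (2 ^ i + 1 : ZMod (2 ^ (i + 2))) * h0

theorem exists_mem_oddsUpTo_natUnit_eq {j : ℕ} (hj : j ≠ 0) (g : (ZMod (2 ^ (j + 1)))ˣ) :
    ∃ y ∈ oddsUpTo (2 ^ j + 1), natUnit (2 ^ (j + 1)) y = g ∨
      natUnit (2 ^ (j + 1)) y = g * natUnit (2 ^ (j + 1)) (2 ^ j + 1) := by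
  have ht : Odd (g : ZMod (2 ^ (j + 1))).val := Nat.coprime_two_right.1 <|
    (Nat.coprime_pow_right_iff j.succ_pos _ _).1 (ZMod.val_coe_unit_coprime g)
  have htlt := ZMod.val_lt (g : ZMod (2 ^ (j + 1)))
  have hgt := ZMod.natCast_zmod_val (g : ZMod (2 ^ (j + 1)))
  generalize (g : ZMod (2 ^ (j + 1))).val = t at ht htlt hgt
  by_cases hsmall : t ≤ 2 ^ j + 1
  · refine ⟨t, mem_oddsUpTo.2 ⟨hsmall, ht⟩, .inl (Units.ext ?_)⟩
    rw [coe_natUnit (ht.coprime_two_pow _), hgt]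
  -- otherwise `t - 2^j ≡ t (2^j + 1) (mod 2^(j+1))` since `t` is odd
  have hle : 2 ^ j ≤ t := by omega
  have hy : Odd (t - 2 ^ j) := Nat.Odd.sub_even hle ht (Nat.even_pow.2 ⟨even_two, by omega⟩)
  refine ⟨t - 2 ^ j, mem_oddsUpTo.2 ⟨by rw [pow_succ] at htlt; omega, hy⟩, .inr (Units.ext ?_)⟩
  obtain ⟨s, rfl⟩ := ht
  have h0 : ((2 ^ (j + 1) : ℕ) : ZMod (2 ^ (j + 1))) = 0 := ZMod.natCast_self _
  rw [Units.val_mul, coe_natUnit (hy.coprime_two_pow _),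
    coe_natUnit ((odd_two_pow_add_one hj).coprime_two_pow _), ← hgt, Nat.cast_sub hle]
  push_cast at h0 ⊢
  linear_combination (-(s + 1) : ZMod (2 ^ (j + 1))) * h0

theorem card_filter_prod_mod_eq {m i : ℕ} {A : Finset ℕ} (hA : ∀ x ∈ A, x.Coprime m)
    (hi : i.Coprime m) (him : i < m) :
    #{S ∈ A.powerset | (∏ x ∈ S, x) % m = i} = subsetProdCount (natUnit m) A (natUnit m i) := by
  refine congrArg card (filter_congr fun S hS => ?_)
  rw [Units.ext_iff, coe_prod_natUnit fun x hx => hA x (mem_powerset.1 hS hx), coe_natUnit hi,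
    ZMod.natCast_eq_natCast_iff', Nat.mod_eq_of_lt him]

/-- each odd residue class mod `2^k` contains the same number of
subsets `S` of the odd numbers `{1, 3, …, 2^(k-1)+1}` with `∏_{x ∈ S} x` in that
class. -/
theorem products_equidistribute_base (k : ℕ) (hk : 1 ≤ k) :
    ∃ c : ℕ, ∀ i : ℕ, Odd i → i < 2 ^ k →
      ((oddsUpTo (2 ^ (k - 1) + 1)).powerset.filter
        (fun S => (∏ x ∈ S, x) % 2 ^ k = i)).card = c := by
  obtain ⟨j, rfl⟩ := Nat.exists_eq_add_of_le' hk
  rw [Nat.add_sub_cancel]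
  have hstab : subsetProdCountStab (natUnit (2 ^ (j + 1))) (oddsUpTo (2 ^ j + 1)) = ⊤ := by
    rcases eq_or_ne j 0 with rfl | hj
    · exact (Subgroup.eq_top_iff' _).2 fun g => Subsingleton.elim (α := (ZMod 2)ˣ) g 1 ▸ one_mem _
    · exact subsetProdCountStab_eq_top (isPGroup_units_zmod_two_pow _)
        (mem_oddsUpTo.2 ⟨le_rfl, odd_two_pow_add_one hj⟩) (natUnit_two_pow_add_one_sq hj)
        (exists_mem_oddsUpTo_natUnit_eq hj)
  refine ⟨subsetProdCount (natUnit (2 ^ (j + 1))) (oddsUpTo (2 ^ j + 1)) 1, fun i hi hik => ?_⟩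
  rw [card_filter_prod_mod_eq (fun x hx => (mem_oddsUpTo.1 hx).2.coprime_two_pow _)
    (hi.coprime_two_pow _) hik, ← one_mul (natUnit _ i)]
  exact mem_subsetProdCountStab.1 (hstab ▸ Subgroup.mem_top _) 1
end
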